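/- Let X ⊆ B_d, fix an integer k ≥ 1, reals β, β̂ ≥ 1 and B, B̂ ≥ 0, and a grid length c > 0. For x ∈ ℝ^d let x̃ denote the center of the cell of the axis-aligned grid of side c containing x (so that κ(x, x̃) ≤ c·Δ/2). Suppose F* ⊆ B_d with |F*| = k satisfies sup_{x∈X} κ(x, F*) ≤ β·OPT + B, let S ⊆ X be a finite set such that for every f ∈ F* there exists x_f ∈ S whose nearest point in F* is f, and suppose G̃ ⊆ B_d satisfies max_{x∈S} κ(x̃, G̃) ≤ β̂·(inf over G ⊆ B_d with |G| = k of max_{x∈S} κ(x̃, G)) + B̂. Then for every x ∈ X, κ(x, G̃) ≤ (2β + β̂)·OPT + 2B + B̂ + (4β + 2β̂ + 1)·c·Δ. -/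

import Mathlib

/-- `κ(x, F) = min_{f ∈ F} N (x - f)`. -/
noncomputable def setDist {d : ℕ} (N : Seminorm ℝ (Fin d → ℝ))
    (x : Fin d → ℝ) (F : Finset (Fin d → ℝ)) : ℝ :=
  sInf {r | ∃ f ∈ F, r = N (x - f)}

/-- `B_d`: the `κ`-ball of diameter 1 centered at the origin. -/
def ballD {d : ℕ} (N : Seminorm ℝ (Fin d → ℝ)) : Set (Fin d → ℝ) := {x | N x ≤ 1 / 2}

/-- The `κ`-diameter `Δ` of the unit cube `[0,1)^d`. -/
noncomputable def cubeDiam {d : ℕ} (N : Seminorm ℝ (Fin d → ℝ)) : ℝ :=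
  sSup {r | ∃ x y : Fin d → ℝ, (∀ j, 0 ≤ x j ∧ x j < 1) ∧ (∀ j, 0 ≤ y j ∧ y j < 1) ∧
    r = N (x - y)}

/-- The statistical `k`-centers cost of `F` over the domain `Y`: `sup_{x ∈ Y} κ(x, F)`. -/
noncomputable def kcCost {d : ℕ} (N : Seminorm ℝ (Fin d → ℝ))
    (Y : Set (Fin d → ℝ)) (F : Finset (Fin d → ℝ)) : ℝ :=
  sSup {t | ∃ x ∈ Y, t = setDist N x F}

/-- The optimal statistical `k`-centers cost over the domain `Y`, with centers in `B_d`. -/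
noncomputable def kcOPT {d : ℕ} (N : Seminorm ℝ (Fin d → ℝ))
    (k : ℕ) (Y : Set (Fin d → ℝ)) : ℝ :=
  sInf {r | ∃ F : Finset (Fin d → ℝ), ↑F ⊆ ballD N ∧ F.card = k ∧ r = kcCost N Y F}

/-!
For `x ∈ X` let `f` be its nearest center in `F*` and `s ∈ S` a sample point whose nearest center
is `f`, so that `κ(x, f), κ(s, f) ≤ β·OPT + B`. Going from `x` to `f`, to `s` and to the grid
center `s̃` gives `κ(x, G̃) ≤ 2(β·OPT + B) + cΔ/2 + κ(s̃, G̃)`. Moving the points of `S` by at most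
`cΔ/2` changes the `k`-centers cost of any set of centers by at most `cΔ/2`, so the optimum for the
rounded sample is at most `OPT + cΔ/2`, and the oracle guarantee bounds `κ(s̃, G̃)`.
-/

section KCenters

variable {d : ℕ} (N : Seminorm ℝ (Fin d → ℝ))

theorem setDist_empty (x : Fin d → ℝ) : setDist N x ∅ = 0 := by
  simp [setDist]

theorem setDist_nonneg (x : Fin d → ℝ) (F : Finset (Fin d → ℝ)) : 0 ≤ setDist N x F :=
  Real.sInf_nonneg <| by rintro r ⟨f, -, rfl⟩; exact apply_nonneg N _

theorem setDist_le_of_mem {x f : Fin d → ℝ} {F : Finset (Fin d → ℝ)} (hf : f ∈ F) :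
    setDist N x F ≤ N (x - f) :=
  csInf_le ⟨0, by rintro r ⟨g, -, rfl⟩; exact apply_nonneg N _⟩ ⟨f, hf, rfl⟩

theorem setDist_eq_of_forall_le {x f : Fin d → ℝ} {F : Finset (Fin d → ℝ)} (hf : f ∈ F)
    (hmin : ∀ g ∈ F, N (x - f) ≤ N (x - g)) : setDist N x F = N (x - f) :=
  le_antisymm (setDist_le_of_mem N hf) <|
    le_csInf ⟨_, f, hf, rfl⟩ <| by rintro r ⟨g, hg, rfl⟩; exact hmin g hg

theorem exists_mem_setDist_eq (x : Fin d → ℝ) {F : Finset (Fin d → ℝ)} (hF : F.Nonempty) :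
    ∃ f ∈ F, setDist N x F = N (x - f) := by
  obtain ⟨f, hf, hmin⟩ := F.exists_min_image (fun f => N (x - f)) hF
  exact ⟨f, hf, setDist_eq_of_forall_le N hf hmin⟩

theorem setDist_le_add_setDist (x y : Fin d → ℝ) (F : Finset (Fin d → ℝ)) :
    setDist N x F ≤ N (x - y) + setDist N y F := by
  rcases F.eq_empty_or_nonempty with rfl | hF
  · simp only [setDist_empty, add_zero, apply_nonneg]
  obtain ⟨f, hf, hyf⟩ := exists_mem_setDist_eq N y hF
  calc setDist N x F ≤ N (x - f) := setDist_le_of_mem N hf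
    _ = N ((x - y) + (y - f)) := by rw [sub_add_sub_cancel]
    _ ≤ N (x - y) + setDist N y F := hyf ▸ map_add_le_add N _ _

theorem setDist_le_one {x : Fin d → ℝ} {F : Finset (Fin d → ℝ)} (hx : x ∈ ballD N)
    (hF : ↑F ⊆ ballD N) : setDist N x F ≤ 1 := by
  rcases F.eq_empty_or_nonempty with rfl | ⟨f, hf⟩
  · simp [setDist_empty]
  have hf' : N f ≤ 1 / 2 := hF hf
  have hx' : N x ≤ 1 / 2 := hx
  calc setDist N x F ≤ N (x - f) := setDist_le_of_mem N hf
    _ ≤ N x + N f := map_sub_le_add N x f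
    _ ≤ 1 := by linarith

theorem kcCost_nonneg (Y : Set (Fin d → ℝ)) (F : Finset (Fin d → ℝ)) : 0 ≤ kcCost N Y F :=
  Real.sSup_nonneg <| by rintro t ⟨y, -, rfl⟩; exact setDist_nonneg N y F

theorem setDist_le_kcCost {Y : Set (Fin d → ℝ)} {F : Finset (Fin d → ℝ)} (hY : Y ⊆ ballD N)
    (hF : ↑F ⊆ ballD N) {y : Fin d → ℝ} (hy : y ∈ Y) : setDist N y F ≤ kcCost N Y F :=
  le_csSup ⟨1, by rintro t ⟨z, hz, rfl⟩; exact setDist_le_one N (hY hz) hF⟩ ⟨y, hy, rfl⟩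

theorem kcCost_le_add_of_forall_near {Y Y' : Set (Fin d → ℝ)} {F : Finset (Fin d → ℝ)} {ε : ℝ}
    (hε : 0 ≤ ε) (hY : Y ⊆ ballD N) (hF : ↑F ⊆ ballD N)
    (hnear : ∀ y' ∈ Y', ∃ y ∈ Y, N (y' - y) ≤ ε) : kcCost N Y' F ≤ kcCost N Y F + ε := by
  refine Real.sSup_le ?_ (add_nonneg (kcCost_nonneg N Y F) hε)
  rintro t ⟨y', hy', rfl⟩
  obtain ⟨y, hy, hyy'⟩ := hnear y' hy'
  linarith [setDist_le_add_setDist N y' y F, setDist_le_kcCost N hY hF hy]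

theorem kcOPT_le_add_of_forall_near {k : ℕ} {Y Y' : Set (Fin d → ℝ)} {ε : ℝ} (hε : 0 ≤ ε)
    (hY : Y ⊆ ballD N) (hfeasible : ∃ F : Finset (Fin d → ℝ), ↑F ⊆ ballD N ∧ F.card = k)
    (hnear : ∀ y' ∈ Y', ∃ y ∈ Y, N (y' - y) ≤ ε) : kcOPT N k Y' ≤ kcOPT N k Y + ε := by
  obtain ⟨F₀, hF₀, hF₀k⟩ := hfeasible
  suffices kcOPT N k Y' - ε ≤ kcOPT N k Y by linarith
  refine le_csInf ⟨_, F₀, hF₀, hF₀k, rfl⟩ ?_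
  rintro r ⟨F, hF, hFk, rfl⟩
  have hOPT' : kcOPT N k Y' ≤ kcCost N Y' F :=
    csInf_le ⟨0, by rintro r ⟨G, -, -, rfl⟩; exact kcCost_nonneg N Y' G⟩ ⟨F, hF, hFk, rfl⟩
  linarith [kcCost_le_add_of_forall_near N hε hY hF hnear]

theorem kcOPT_image (k : ℕ) (T : (Fin d → ℝ) → Fin d → ℝ) (S : Set (Fin d → ℝ)) :
    kcOPT N k (T '' S) = sInf {r | ∃ G : Finset (Fin d → ℝ), ↑G ⊆ ballD N ∧ G.card = k ∧
      r = sSup {t | ∃ x ∈ S, t = setDist N (T x) G}} := by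
  simp [kcOPT, kcCost]

end KCenters

theorem k_centers_oracle_with_grid_general {d k : ℕ} (hk : 1 ≤ k)
    (N : Seminorm ℝ (Fin d → ℝ))
    (Δ : ℝ)
    (X : Set (Fin d → ℝ)) (hX : X ⊆ ballD N)
    (β B βh Bh : ℝ) (hβ : 1 ≤ β) (hβh : 1 ≤ βh)
    (c : ℝ)
    -- `Tc x` is the center of the cell of the axis-aligned grid of side `c` containing `x`,
    (Tc : (Fin d → ℝ) → Fin d → ℝ)
    -- so that `κ(x, x̃) ≤ c·Δ/2`:
    (hTcDist : ∀ x : Fin d → ℝ, (N (x - Tc x) : ℝ) ≤ c * Δ / 2)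
    (Fstar : Finset (Fin d → ℝ)) (hFstarSub : ↑Fstar ⊆ ballD N) (hFstarCard : Fstar.card = k)
    (hFstarApx : ∀ x ∈ X, setDist N x Fstar ≤ β * kcOPT N k X + B)
    (S : Finset (Fin d → ℝ)) (hS : ↑S ⊆ X)
    (hScover : ∀ f ∈ Fstar, ∃ x ∈ S, ∀ f' ∈ Fstar, (N (x - f) : ℝ) ≤ N (x - f'))
    (Gt : Finset (Fin d → ℝ))
    (hGtApx : ∀ x ∈ S, setDist N (Tc x) Gt
      ≤ βh * sInf {r | ∃ G : Finset (Fin d → ℝ), ↑G ⊆ ballD N ∧ G.card = k ∧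
            r = sSup {t | ∃ x ∈ (S : Set (Fin d → ℝ)), t = setDist N (Tc x) G}} + Bh) :
    ∀ x ∈ X, setDist N x Gt
      ≤ (2 * β + βh) * kcOPT N k X + 2 * B + Bh + (4 * β + 2 * βh + 1) * c * Δ := by
  intro x hx
  have hε : 0 ≤ c * Δ / 2 := (apply_nonneg N _).trans (hTcDist 0)
  have hFstar : Fstar.Nonempty := Finset.card_pos.mp (by omega)
  obtain ⟨f, hf, hxf⟩ := exists_mem_setDist_eq N x hFstar
  obtain ⟨s, hs, hs_near⟩ := hScover f hf
  have hxf' : N (x - f) ≤ β * kcOPT N k X + B := hxf ▸ hFstarApx x hx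
  have hsf : N (f - s) ≤ β * kcOPT N k X + B := by
    rw [map_sub_rev, ← setDist_eq_of_forall_le N hf hs_near]; exact hFstarApx s (hS hs)
  have hOPTgrid := kcOPT_le_add_of_forall_near N (Y' := Tc '' S) hε hX
    ⟨Fstar, hFstarSub, hFstarCard⟩ <| by
      rintro _ ⟨y, hy, rfl⟩
      exact ⟨y, hS hy, by rw [map_sub_rev]; exact hTcDist y⟩
  rw [kcOPT_image] at hOPTgrid
  have hGs : setDist N (Tc s) Gt ≤ βh * (kcOPT N k X + c * Δ / 2) + Bh :=
    (hGtApx s hs).trans (by gcongr)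
  calc setDist N x Gt ≤ N (x - f) + (N (f - s) + (N (s - Tc s) + setDist N (Tc s) Gt)) := by
        linarith [setDist_le_add_setDist N x f Gt, setDist_le_add_setDist N f s Gt,
          setDist_le_add_setDist N s (Tc s) Gt]
    _ ≤ _ := by
        have : 0 ≤ (4 * β + 3 / 2 * βh + 1 / 2) * (c * Δ / 2) := mul_nonneg (by linarith) hε
        linarith [hTcDist s]

/-- `k`-centers oracle with a grid: rounding the sample points to the centers of the cells
of an axis-aligned grid of side `c` before calling a `(β̂,B̂)`-approximation oracle costs
only an extra additive `(4β + 2β̂ + 1)·c·Δ` term. -/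
theorem k_centers_oracle_with_grid {d k : ℕ} (hk : 1 ≤ k)
    (N : Seminorm ℝ (Fin d → ℝ)) (hNdef : ∀ x, N x = 0 → x = 0)
    (Δ : ℝ) (hΔdef : Δ = cubeDiam N)
    (X : Set (Fin d → ℝ)) (hX : X ⊆ ballD N)
    (β B βh Bh : ℝ) (hβ : 1 ≤ β) (hβh : 1 ≤ βh) (hB : 0 ≤ B) (hBh : 0 ≤ Bh)
    (c : ℝ) (hc : 0 < c)
    -- `Tc x` is the center of the cell of the axis-aligned grid of side `c` containing `x`,
    (Tc : (Fin d → ℝ) → Fin d → ℝ)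
    (hTc : ∀ x : Fin d → ℝ, ∃ z : Fin d → ℤ,
      (∀ j, c * z j ≤ x j ∧ x j < c * (z j + 1)) ∧ ∀ j, Tc x j = c * z j + c / 2)
    -- so that `κ(x, x̃) ≤ c·Δ/2`:
    (hTcDist : ∀ x : Fin d → ℝ, (N (x - Tc x) : ℝ) ≤ c * Δ / 2)
    (Fstar : Finset (Fin d → ℝ)) (hFstarSub : ↑Fstar ⊆ ballD N) (hFstarCard : Fstar.card = k)
    (hFstarApx : ∀ x ∈ X, setDist N x Fstar ≤ β * kcOPT N k X + B)
    (S : Finset (Fin d → ℝ)) (hS : ↑S ⊆ X)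
    (hScover : ∀ f ∈ Fstar, ∃ x ∈ S, ∀ f' ∈ Fstar, (N (x - f) : ℝ) ≤ N (x - f'))
    (Gt : Finset (Fin d → ℝ)) (hGtSub : ↑Gt ⊆ ballD N)
    (hGtApx : ∀ x ∈ S, setDist N (Tc x) Gt
      ≤ βh * sInf {r | ∃ G : Finset (Fin d → ℝ), ↑G ⊆ ballD N ∧ G.card = k ∧
            r = sSup {t | ∃ x ∈ (S : Set (Fin d → ℝ)), t = setDist N (Tc x) G}} + Bh) :
    ∀ x ∈ X, setDist N x Gt
      ≤ (2 * β + βh) * kcOPT N k X + 2 * B + Bh + (4 * β + 2 * βh + 1) * c * Δ :=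
  k_centers_oracle_with_grid_general hk N Δ X hX β B βh Bh hβ hβh c Tc hTcDist Fstar hFstarSub
    hFstarCard hFstarApx S hS hScover Gt hGtApx
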